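/- arXiv:1804.03538 — 2 statements merged into one kernel-verified Lean document; each statement's English description precedes it below -/
import Mathlib

section
/- Let (ν_x)_{x>0} be a weak*-measurable family of probability measures on ℝ with ∫₀^∞ φ(x)N(x)⟨ν_x, |α|⟩ dx < ∞, let m̄ be a finite nonnegative Radon measure on (0,∞), and let H be a strictly convex, differentiable, even admissible integrand. Suppose that both of the following nonnegative quantities are finite and their sum vanishes: D_∞ := ∫₀^∞∫₀^∞ φ(x)N(y)B(y)k(x,y) ⟨ν_y(ξ)⊗ν_x(α), H(ξ) − H(α) − H'(α)(ξ−α)⟩ dx dy + ∫₀^∞∫₀^∞ φ(x)N(y)B(y)k(x,y) ⟨ν_x(α), H^∞(1) − H'(α)⟩ dm̄(y) dx = 0. Then m̄ = 0 and there exists a constant c ∈ ℝ such that ν_x = δ_c for Lebesgue-almost every x > 0. -/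
/-!
The dissipation is a sum of two nonnegative double integrals whose kernels
`φ(x) N(y) B(y) k(x,y)` are positive on the triangle `0 < x < y`.

Since `H` is strictly convex with slope at infinity `H^∞(1)`, every derivative `H'(α)` is strictly
below `H^∞(1)`, so the inner integrand of the `m̄`-term is positive and that term can only vanish
if `m̄ = 0`. The Bregman divergence `H(ξ) - H(α) - H'(α)(ξ - α)` is positive off the diagonal, so
the vanishing of the first term forces `ν_y ⊗ ν_x` to live on the diagonal, i.e.
`ν_x = ν_y = δ_c` for a.e. `x < y`. Comparing along a sequence `y_n → ∞` makes `c` independent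
of `y`.
-/

open MeasureTheory Filter Set Topology
open scoped ENNReal

section ConvexAnalysis

variable {f : ℝ → ℝ}

theorem StrictConvexOn.add_deriv_mul_sub_lt (hf : StrictConvexOn ℝ univ f) {a b : ℝ}
    (hfa : DifferentiableAt ℝ f a) (hba : b ≠ a) : f a + deriv f a * (b - a) < f b := by
  rcases hba.lt_or_gt with hba | hab
  · have h := hf.slope_lt_deriv (mem_univ b) (mem_univ a) hba hfa
    rw [slope_def_field, div_lt_iff₀ (sub_pos.2 hba)] at h
    linarith [show deriv f a * (b - a) = -(deriv f a * (a - b)) by ring]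
  · have h := hf.deriv_lt_slope (mem_univ a) (mem_univ b) hab hfa
    rw [slope_def_field, lt_div_iff₀ (sub_pos.2 hab)] at h
    linarith

theorem StrictConvexOn.deriv_lt_of_tendsto_div_atTop (hf : StrictConvexOn ℝ univ f)
    (hfd : Differentiable ℝ f) {L : ℝ} (hL : Tendsto (fun s => f s / s) atTop (𝓝 L)) (a : ℝ) :
    deriv f a < L := by
  set b := a + 1
  have tangent_div : Tendsto (fun t => deriv f b + (f b - b * deriv f b) / t) atTop
      (𝓝 (deriv f b)) := by
    simpa using tendsto_const_nhds.add
      (tendsto_const_nhds.div_atTop (tendsto_id : Tendsto (fun t : ℝ => t) atTop atTop))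
  have deriv_le : deriv f b ≤ L := le_of_tendsto_of_tendsto tangent_div hL <| by
    filter_upwards [eventually_gt_atTop (max b 0)] with t ht
    have ht0 : 0 < t := (le_max_right _ _).trans_lt ht
    have tangent_lt := hf.add_deriv_mul_sub_lt (hfd b) ((le_max_left _ _).trans_lt ht).ne'
    have : (deriv f b + (f b - b * deriv f b) / t) * t = f b + deriv f b * (t - b) := by
      field_simp
      ring
    rw [le_div_iff₀ ht0, this]
    exact tangent_lt.le
  exact (hf.strictMonoOn_deriv (fun x _ => hfd x) (mem_univ a) (mem_univ b)
    (lt_add_one a)).trans_le deriv_le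

end ConvexAnalysis

namespace MeasureTheory

variable {α β : Type*} [MeasurableSpace α] [MeasurableSpace β]

theorem Measure.eq_dirac_of_ae_eq {μ : Measure α} [IsProbabilityMeasure μ] {c : α}
    (h : ∀ᵐ a ∂μ, a = c) : μ = Measure.dirac c :=
  calc μ = μ.map id := Measure.map_id.symm
    _ = μ.map fun _ => c := Measure.map_congr h
    _ = Measure.dirac c := by rw [Measure.map_const, measure_univ, one_smul]

theorem exists_eq_dirac_of_lintegral_lintegral_eq_zero [MeasurableSingletonClass α]
    {μ ν : Measure α} [IsProbabilityMeasure μ] [IsProbabilityMeasure ν] {W : α → α → ℝ≥0∞}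
    (hW : Measurable (Function.uncurry W)) (hW_pos : ∀ a b, a ≠ b → W a b ≠ 0)
    (h : ∫⁻ a, ∫⁻ b, W a b ∂ν ∂μ = 0) : ∃ c, μ = Measure.dirac c ∧ ν = Measure.dirac c := by
  have diag : ∀ᵐ a ∂μ, ∀ᵐ b ∂ν, b = a := by
    filter_upwards [(lintegral_eq_zero_iff hW.lintegral_prod_right).1 h] with a ha
    filter_upwards [(lintegral_eq_zero_iff (hW.comp measurable_prodMk_left)).1 ha] with b hb
    by_contra hba
    exact hW_pos a b (Ne.symm hba) hb
  obtain ⟨c, hc⟩ := diag.exists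
  have hν : ν = Measure.dirac c := Measure.eq_dirac_of_ae_eq hc
  refine ⟨c, Measure.eq_dirac_of_ae_eq ?_, hν⟩
  filter_upwards [diag] with a ha
  rw [hν] at ha
  exact ((ae_dirac_iff (p := (· = a)) (measurableSet_singleton a)).1 ha).symm

theorem ae_ae_eq_zero_of_lintegral_lintegral_eq_zero {μ : Measure α} {ν : Measure β} [SFinite ν]
    {f : α → β → ℝ≥0∞} (hf : AEMeasurable (Function.uncurry f) (μ.prod ν))
    (h : ∫⁻ x, ∫⁻ y, f x y ∂ν ∂μ = 0) : ∀ᵐ x ∂μ, ∀ᵐ y ∂ν, f x y = 0 :=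
  Measure.ae_ae_of_ae_prod ((lintegral_eq_zero_iff' hf).1 ((lintegral_prod _ hf).trans h))

theorem Measurable.lintegral_measure_prod_right {κ : α → Measure β} (hκ : Measurable κ)
    [∀ a, IsProbabilityMeasure (κ a)] {f : α → β → ℝ≥0∞}
    (hf : Measurable (Function.uncurry f)) : Measurable fun a => ∫⁻ b, f a b ∂κ a :=
  have : ProbabilityTheory.IsMarkovKernel ⟨κ, hκ⟩ := ⟨inferInstance⟩
  hf.lintegral_kernel_prod_right (κ := ⟨κ, hκ⟩)

theorem measurable_measure_of_measurable_integral {Ω : Type*} [TopologicalSpace Ω]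
    [MeasurableSpace Ω] [BorelSpace Ω] [HasOuterApproxClosed Ω] {μ : α → Measure Ω}
    [∀ a, IsProbabilityMeasure (μ a)]
    (h : ∀ g : Ω → ℝ, Continuous g → (∃ C, ∀ ω, |g ω| ≤ C) → Measurable fun a => ∫ ω, g ω ∂μ a) :
    Measurable μ := by
  -- Closed sets generate the Borel σ-algebra, and their indicators are pointwise limits of
  -- continuous functions with values in `[0, 1]`.
  refine .measure_of_isPiSystem_of_isProbabilityMeasure
    (BorelSpace.measurable_eq.trans borel_eq_generateFrom_isClosed) isPiSystem_isClosed
    fun F hF => ENNReal.measurable_of_tendsto (fun n => ?_)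
      (tendsto_pi_nhds.2 fun a => HasOuterApproxClosed.tendsto_lintegral_apprSeq hF (μ a))
  have hg : Continuous fun ω => (hF.apprSeq n ω : ℝ) := by fun_prop
  have hg_bdd : ∀ ω, |(hF.apprSeq n ω : ℝ)| ≤ 1 := fun ω => by
    simpa using HasOuterApproxClosed.apprSeq_apply_le_one hF n ω
  have hg_int : ∀ a, Integrable (fun ω => (hF.apprSeq n ω : ℝ)) (μ a) := fun a =>
    (integrable_const (1 : ℝ)).mono' hg.aestronglyMeasurable (ae_of_all _ hg_bdd)
  simp_rw [fun a => lintegral_coe_eq_integral _ (hg_int a)]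
  exact ENNReal.measurable_ofReal.comp (h _ hg ⟨1, hg_bdd⟩)

theorem ContinuousOn.aemeasurable_restrict_prod [TopologicalSpace α] [TopologicalSpace β]
    [SecondCountableTopology α] [SecondCountableTopology β] [OpensMeasurableSpace α]
    [OpensMeasurableSpace β] {γ : Type*} [TopologicalSpace γ] [MeasurableSpace γ] [BorelSpace γ]
    {ρ : Measure α} {σ : Measure β} [SFinite ρ] [SFinite σ] {s : Set α} {t : Set β}
    (hs : MeasurableSet s) (ht : MeasurableSet t) {f : α × β → γ}
    (hf : ContinuousOn f (s ×ˢ t)) : AEMeasurable f ((ρ.restrict s).prod (σ.restrict t)) := by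
  rw [Measure.prod_restrict]
  exact hf.aemeasurable (hs.prod ht)

end MeasureTheory

section HalfLine

variable {a : ℝ} {p : ℝ → Prop}

theorem exists_mem_Ioo_of_ae_restrict_Ioi (h : ∀ᵐ x ∂volume.restrict (Ioi a), p x) {y : ℝ}
    (hay : a < y) : ∃ x ∈ Ioo a y, p x :=
  Measure.exists_mem_of_measure_ne_zero_of_ae (by simpa using hay)
    (ae_restrict_of_ae_restrict_of_subset Ioo_subset_Ioi_self h)

theorem exists_gt_of_ae_restrict_Ioi (h : ∀ᵐ x ∂volume.restrict (Ioi a), p x) (b : ℝ) :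
    ∃ x > b, p x := by
  obtain ⟨x, hx, hpx⟩ := Measure.exists_mem_of_measure_ne_zero_of_ae (s := Ioi (max a b))
    (by simp) (ae_restrict_of_ae_restrict_of_subset (Ioi_subset_Ioi (le_max_left a b)) h)
  exact ⟨x, (le_max_right a b).trans_lt hx, hpx⟩

theorem ae_ae_eq_of_ae_ae_lt_imp_eq {γ : Type*} {f : ℝ → γ}
    (h : ∀ᵐ y ∂volume.restrict (Ioi a), ∀ᵐ x ∂volume.restrict (Ioi a), x < y → f x = f y) :
    ∀ᵐ y ∂volume.restrict (Ioi a), ∀ᵐ x ∂volume.restrict (Ioi a), f x = f y := by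
  have good : ∀ᵐ y ∂volume.restrict (Ioi a),
      a < y ∧ ∀ᵐ x ∂volume.restrict (Ioi a), x < y → f x = f y :=
    (ae_restrict_mem measurableSet_Ioi).and h
  have eq_of_good : ∀ y y', a < y → (∀ᵐ x ∂volume.restrict (Ioi a), x < y → f x = f y) →
      a < y' → (∀ᵐ x ∂volume.restrict (Ioi a), x < y' → f x = f y') → f y = f y' := by
    intro y y' hay hy hay' hy'
    obtain ⟨x, hx, hxy, hxy'⟩ := exists_mem_Ioo_of_ae_restrict_Ioi (hy.and hy') (lt_min hay hay')
    exact (hxy (hx.2.trans_le (min_le_left _ _))).symm.trans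
      (hxy' (hx.2.trans_le (min_le_right _ _)))
  choose z hz hz_good using fun n : ℕ => exists_gt_of_ae_restrict_Ioi good n
  have below_z : ∀ᵐ x ∂volume.restrict (Ioi a), ∀ n, x < z n → f x = f (z n) :=
    ae_all_iff.2 fun n => (hz_good n).2
  filter_upwards [good] with y ⟨hay, hy⟩
  filter_upwards [below_z] with x hx
  obtain ⟨n, hn⟩ := exists_nat_gt x
  exact (hx n (hn.trans (hz n))).trans (eq_of_good _ _ (hz_good n).1 (hz_good n).2 hay hy)

theorem exists_ae_eq_dirac_of_ae_ae_lt {γ : Type*} [MeasurableSpace γ] {ν : ℝ → Measure γ}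
    (h : ∀ᵐ y ∂volume.restrict (Ioi a), ∀ᵐ x ∂volume.restrict (Ioi a),
      x < y → ∃ c, ν x = Measure.dirac c ∧ ν y = Measure.dirac c) :
    ∃ c, ∀ᵐ x ∂volume.restrict (Ioi a), ν x = Measure.dirac c := by
  have dirac_ae : ∀ᵐ y ∂volume.restrict (Ioi a), ∃ c, ν y = Measure.dirac c := by
    filter_upwards [h, ae_restrict_mem measurableSet_Ioi] with y hy hay
    obtain ⟨x, hx, hxy⟩ := exists_mem_Ioo_of_ae_restrict_Ioi hy hay
    exact (hxy hx.2).imp fun _ => And.right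
  have const_ae := ae_ae_eq_of_ae_ae_lt_imp_eq (f := ν) <| h.mono fun y hy => hy.mono
    fun x hx hxy => by obtain ⟨c, hcx, hcy⟩ := hx hxy; rw [hcx, hcy]
  obtain ⟨y, -, ⟨c, hc⟩, hy⟩ := exists_gt_of_ae_restrict_Ioi (dirac_ae.and const_ae) a
  exact ⟨c, hy.mono fun x hx => hx.trans hc⟩

end HalfLine

section Dissipation

variable {c : ℝ → ℝ → ℝ}

theorem eq_zero_of_lintegral_ofReal_mul_eq_zero {m : Measure ℝ} [SFinite m] (hm : m (Iic 0) = 0)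
    (hc : ContinuousOn (Function.uncurry c) (Ioi 0 ×ˢ Ioi 0))
    (hc_pos : ∀ y x, 0 < x → x < y → 0 < c y x) {g : ℝ → ℝ≥0∞} (hg : Measurable g)
    (hg_pos : ∀ x, g x ≠ 0)
    (h : ∫⁻ y, (∫⁻ x in Ioi 0, ENNReal.ofReal (c y x) * g x) ∂m = 0) : m = 0 := by
  have hm_restrict : m.restrict (Ioi 0) = m :=
    Measure.restrict_eq_self_of_ae_mem <| mem_ae_iff.2 <| by
      rwa [show {x | x ∈ Ioi (0 : ℝ)}ᶜ = Iic 0 from compl_Ioi]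
  -- `c` is only continuous on the open quadrant, so we work with `m` restricted to `Ioi 0`.
  rw [← hm_restrict] at h ⊢
  have h0 := ae_ae_eq_zero_of_lintegral_lintegral_eq_zero
    ((ENNReal.measurable_ofReal.comp_aemeasurable
      (hc.aemeasurable_restrict_prod measurableSet_Ioi measurableSet_Ioi)).mul
      (hg.comp measurable_snd).aemeasurable) h
  suffices ∀ᵐ _ ∂m.restrict (Ioi 0), False from ae_eq_bot.1 (eventually_false_iff_eq_bot.1 this)
  filter_upwards [h0, ae_restrict_mem measurableSet_Ioi] with y hy hy0
  obtain ⟨x, hx, hx0⟩ := exists_mem_Ioo_of_ae_restrict_Ioi hy hy0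
  exact mul_ne_zero (ENNReal.ofReal_pos.2 (hc_pos y x hx.1 hx.2)).ne' (hg_pos x) hx0

theorem exists_ae_eq_dirac_of_lintegral_ofReal_mul_eq_zero {γ : Type*} [MeasurableSpace γ]
    [MeasurableSingletonClass γ] {ν : ℝ → Measure γ} (hν : Measurable ν)
    [∀ x, IsProbabilityMeasure (ν x)]
    (hc : ContinuousOn (Function.uncurry c) (Ioi 0 ×ˢ Ioi 0))
    (hc_pos : ∀ y x, 0 < x → x < y → 0 < c y x) {W : γ → γ → ℝ≥0∞}
    (hW : Measurable (Function.uncurry W)) (hW_pos : ∀ a b, a ≠ b → W a b ≠ 0)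
    (h : ∫⁻ y in Ioi 0, ∫⁻ x in Ioi 0,
      ENNReal.ofReal (c y x) * ∫⁻ a, ∫⁻ b, W a b ∂ν y ∂ν x = 0) :
    ∃ a, ∀ᵐ x ∂volume.restrict (Ioi 0), ν x = Measure.dirac a := by
  have hW_int : Measurable fun p : γ × ℝ => ∫⁻ b, W p.1 b ∂ν p.2 :=
    (show Measurable fun p : γ × ℝ => ν p.2 from hν.comp measurable_snd)
      |>.lintegral_measure_prod_right (hW.comp (measurable_fst.fst.prodMk measurable_snd))
  have hE : Measurable fun p : ℝ × ℝ => ∫⁻ a, ∫⁻ b, W a b ∂ν p.1 ∂ν p.2 :=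
    (show Measurable fun p : ℝ × ℝ => ν p.2 from hν.comp measurable_snd)
      |>.lintegral_measure_prod_right (hW_int.comp (measurable_snd.prodMk measurable_fst.fst))
  have h0 := ae_ae_eq_zero_of_lintegral_lintegral_eq_zero
    ((ENNReal.measurable_ofReal.comp_aemeasurable
      (hc.aemeasurable_restrict_prod measurableSet_Ioi measurableSet_Ioi)).mul
      hE.aemeasurable) h
  refine exists_ae_eq_dirac_of_ae_ae_lt ?_
  filter_upwards [h0] with y hy
  filter_upwards [hy, ae_restrict_mem measurableSet_Ioi] with x hx hx0 hxy
  refine exists_eq_dirac_of_lintegral_lintegral_eq_zero hW hW_pos ?_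
  exact (mul_eq_zero.1 hx).resolve_left (ENNReal.ofReal_pos.2 (hc_pos y x hx0 hxy)).ne'

end Dissipation

theorem vanishing_dissipation_implies_dirac_general
    (B N phi : ℝ → ℝ) (k : ℝ → ℝ → ℝ)
    (hB_lip : ∃ C : NNReal, LipschitzOnWith C B (Ici 0))
    (hB_pos : ∀ x, 0 ≤ x → 0 < B x)
    (hk_cont : Continuous (Function.uncurry k))
    (hk_pos : ∀ x y, 0 ≤ x → x < y → 0 < k x y)
    (hN_cont : ContinuousOn N (Ioi 0)) (hN_pos : ∀ x, 0 < x → 0 < N x)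
    (hphi_cont : ContinuousOn phi (Ioi 0)) (hphi_pos : ∀ x, 0 < x → 0 < phi x)
    (ν : ℝ → Measure ℝ) (hprob : ∀ x, IsProbabilityMeasure (ν x))
    (hmeas : ∀ g : ℝ → ℝ, Continuous g → (∃ Cg, ∀ x, |g x| ≤ Cg) →
      Measurable fun x => ∫ ξ, g ξ ∂(ν x))
    (mbar : Measure ℝ) [IsFiniteMeasure mbar] (hmbar_supp : mbar (Iic 0) = 0)
    (H : ℝ → ℝ) (hHdiff : Differentiable ℝ H)
    (hHconv : StrictConvexOn ℝ Set.univ H)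
    (Hinf : ℝ) (hHinf : Tendsto (fun s => H s / s) atTop (nhds Hinf))
    (hDzero :
      (∫⁻ y in Ioi (0:ℝ), ∫⁻ x in Ioi (0:ℝ),
          ENNReal.ofReal (phi x * N y * B y * k x y) *
            ∫⁻ α, (∫⁻ ξ, ENNReal.ofReal (H ξ - H α - deriv H α * (ξ - α)) ∂(ν y)) ∂(ν x))
        + (∫⁻ y, (∫⁻ x in Ioi (0:ℝ),
            ENNReal.ofReal (phi x * N y * B y * k x y) *
              ∫⁻ α, ENNReal.ofReal (Hinf - deriv H α) ∂(ν x)) ∂mbar)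
        = 0) :
    mbar = 0 ∧ ∃ c : ℝ, ∀ᵐ x ∂(volume.restrict (Ioi (0:ℝ))), ν x = Measure.dirac c := by
  have : ∀ x, IsProbabilityMeasure (ν x) := hprob
  obtain ⟨hD1, hD2⟩ := add_eq_zero.mp hDzero
  obtain ⟨L, hL⟩ := hB_lip
  have hcoeff : ContinuousOn (Function.uncurry fun y x => phi x * N y * B y * k x y)
      (Ioi 0 ×ˢ Ioi 0) :=
    (((hphi_cont.comp continuousOn_snd fun p hp => hp.2).mul
      (hN_cont.comp continuousOn_fst fun p hp => hp.1)).mul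
      ((hL.continuousOn.mono (Ioi_subset_Ici le_rfl)).comp continuousOn_fst fun p hp => hp.1)).mul
      (hk_cont.comp continuous_swap).continuousOn
  have hcoeff_pos : ∀ y x, 0 < x → x < y → 0 < phi x * N y * B y * k x y := fun y x hx hxy =>
    have hy := hx.trans hxy
    mul_pos (mul_pos (mul_pos (hphi_pos x hx) (hN_pos y hy)) (hB_pos y hy.le))
      (hk_pos x y hx.le hxy)
  have hν : Measurable ν := measurable_measure_of_measurable_integral hmeas
  have hH'_lt := hHconv.deriv_lt_of_tendsto_div_atTop hHdiff hHinf
  have hH : Measurable H := hHdiff.continuous.measurable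
  have hH' : Measurable (deriv H) := measurable_deriv H
  refine ⟨eq_zero_of_lintegral_ofReal_mul_eq_zero hmbar_supp hcoeff hcoeff_pos ?_ ?_ hD2,
    exists_ae_eq_dirac_of_lintegral_ofReal_mul_eq_zero hν hcoeff hcoeff_pos ?_ ?_ hD1⟩
  · exact hν.lintegral_measure_prod_right (by fun_prop)
  · intro x h0
    obtain ⟨α, hα⟩ := ((lintegral_eq_zero_iff (by fun_prop)).1 h0).exists
    exact (ENNReal.ofReal_pos.2 (sub_pos.2 (hH'_lt α))).ne' hα
  · fun_prop
  · intro α ξ hαξ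
    exact (ENNReal.ofReal_pos.2 (by linarith [hHconv.add_deriv_mul_sub_lt (hHdiff α) hαξ.symm])).ne'

/-- vanishing dissipation forces a constant Dirac profile: let
`(ν_x)_{x>0}` be a weak*-measurable family of probability measures on `ℝ` with
`∫₀^∞ φ(x)N(x)⟨ν_x,|α|⟩dx < ∞`, `m̄` a finite nonnegative measure on `(0,∞)`, and
`H` a strictly convex, differentiable, even admissible integrand with recession
constant `H^∞(1) = Hinf`. If the two nonnegative parts of the limiting entropy
dissipation are finite and their sum vanishes, then `m̄ = 0` and `ν_x = δ_c` for
a.e. `x > 0`, for some constant `c`. -/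
theorem vanishing_dissipation_implies_dirac
    (B N phi : ℝ → ℝ) (k : ℝ → ℝ → ℝ)
    (hB_bdd : ∃ C, ∀ x, 0 ≤ x → |B x| ≤ C)
    (hB_lip : ∃ C : NNReal, LipschitzOnWith C B (Ici 0))
    (hB_pos : ∀ x, 0 ≤ x → 0 < B x)
    (hk_cont : Continuous (Function.uncurry k))
    (hk_bdd : ∃ C, ∀ x y, 0 ≤ x → 0 ≤ y → |k x y| ≤ C)
    (hk_zero : ∀ x y, 0 ≤ y → y < x → k x y = 0)
    (hk_pos : ∀ x y, 0 ≤ x → x < y → 0 < k x y)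
    (hN_cont : ContinuousOn N (Ioi 0)) (hN_pos : ∀ x, 0 < x → 0 < N x)
    (hphi_cont : ContinuousOn phi (Ioi 0)) (hphi_pos : ∀ x, 0 < x → 0 < phi x)
    (ν : ℝ → Measure ℝ) (hprob : ∀ x, IsProbabilityMeasure (ν x))
    (hmeas : ∀ g : ℝ → ℝ, Continuous g → (∃ Cg, ∀ x, |g x| ≤ Cg) →
      Measurable fun x => ∫ ξ, g ξ ∂(ν x))
    (hfirstmoment :
      (∫⁻ x in Ioi (0:ℝ),
        ENNReal.ofReal (phi x * N x) * ∫⁻ α, ENNReal.ofReal |α| ∂(ν x)) < ⊤)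
    (mbar : Measure ℝ) [IsFiniteMeasure mbar] (hmbar_supp : mbar (Iic 0) = 0)
    (H : ℝ → ℝ) (hHdiff : Differentiable ℝ H)
    (hHconv : StrictConvexOn ℝ Set.univ H)
    (hHnonneg : ∀ x, 0 ≤ H x) (hHeven : ∀ x, H (-x) = H x)
    (hHgrowth : ∃ C, ∀ x, |H x| ≤ C * (1 + |x|))
    (Hinf : ℝ) (hHinf : Tendsto (fun s => H s / s) atTop (nhds Hinf))
    (hD1fin :
      (∫⁻ y in Ioi (0:ℝ), ∫⁻ x in Ioi (0:ℝ),
          ENNReal.ofReal (phi x * N y * B y * k x y) *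
            ∫⁻ α, (∫⁻ ξ, ENNReal.ofReal (H ξ - H α - deriv H α * (ξ - α)) ∂(ν y)) ∂(ν x)) < ⊤)
    (hD2fin :
      (∫⁻ y, (∫⁻ x in Ioi (0:ℝ),
          ENNReal.ofReal (phi x * N y * B y * k x y) *
            ∫⁻ α, ENNReal.ofReal (Hinf - deriv H α) ∂(ν x)) ∂mbar) < ⊤)
    (hDzero :
      (∫⁻ y in Ioi (0:ℝ), ∫⁻ x in Ioi (0:ℝ),
          ENNReal.ofReal (phi x * N y * B y * k x y) *
            ∫⁻ α, (∫⁻ ξ, ENNReal.ofReal (H ξ - H α - deriv H α * (ξ - α)) ∂(ν y)) ∂(ν x))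
        + (∫⁻ y, (∫⁻ x in Ioi (0:ℝ),
            ENNReal.ofReal (phi x * N y * B y * k x y) *
              ∫⁻ α, ENNReal.ofReal (Hinf - deriv H α) ∂(ν x)) ∂mbar)
        = 0) :
    mbar = 0 ∧ ∃ c : ℝ, ∀ᵐ x ∂(volume.restrict (Ioi (0:ℝ))), ν x = Measure.dirac c :=
  vanishing_dissipation_implies_dirac_general B N phi k hB_lip hB_pos hk_cont hk_pos hN_cont hN_pos
    hphi_cont hphi_pos ν hprob hmeas mbar hmbar_supp H hHdiff hHconv Hinf hHinf hDzero
end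

section
/- Let H : ℝ → [0,∞) be convex, differentiable, even, with at most linear growth, and such that H^∞(1) := lim_{s→∞} H(s)/s exists. Then lim_{s→∞} H'(s) = H^∞(1), and for every α ∈ ℝ, lim_{s→∞} (sα)H'(sα)/s = H^∞(1)|α|; that is, the recession function of the function α ↦ αH'(α) is H^∞. -/
open Filter

private lemma deriv_tendsto_aux (H : ℝ → ℝ) (hconv : ConvexOn ℝ Set.univ H)
    (hdiff : Differentiable ℝ H)
    (Hinf : ℝ) (hHinf : Tendsto (fun s => H s / s) atTop (nhds Hinf)) :
    Tendsto (fun s => deriv H s) atTop (nhds Hinf) := by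
  have hlo : Tendsto (fun s : ℝ => 2 * (H s / s) - H (s/2) / (s/2)) atTop (nhds Hinf) := by
    have h2 : Tendsto (fun s : ℝ => H (s/2) / (s/2)) atTop (nhds Hinf) :=
      hHinf.comp (tendsto_atTop_atTop.2 fun b => ⟨2*b, fun a ha => by linarith⟩)
    have := ((hHinf.const_mul 2).sub h2)
    simpa using by convert this using 2; ring
  have hhi : Tendsto (fun s : ℝ => 2 * (H (2*s) / (2*s)) - H s / s) atTop (nhds Hinf) := by
    have h2 : Tendsto (fun s : ℝ => H (2*s) / (2*s)) atTop (nhds Hinf) :=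
      hHinf.comp (tendsto_atTop_atTop.2 fun b => ⟨b/2, fun a ha => by linarith⟩)
    have := ((h2.const_mul 2).sub hHinf)
    simpa using by convert this using 2; ring
  refine tendsto_of_tendsto_of_tendsto_of_le_of_le' hlo hhi ?_ ?_
  · filter_upwards [eventually_gt_atTop (0:ℝ)] with s hs
    have hslope : slope H (s/2) s ≤ deriv H s :=
      hconv.slope_le_deriv (Set.mem_univ _) (Set.mem_univ _) (by linarith) (hdiff s)
    rw [slope_def_field] at hslope
    have hs' : s ≠ 0 := hs.ne'
    have : 2 * (H s / s) - H (s/2) / (s/2) = (H s - H (s/2)) / (s - s/2) := by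
      rw [show s - s/2 = s/2 by ring]
      field_simp
    rw [this]
    simpa [div_eq_inv_mul, mul_comm] using hslope
  · filter_upwards [eventually_gt_atTop (0:ℝ)] with s hs
    have hslope : deriv H s ≤ slope H s (2*s) :=
      hconv.deriv_le_slope (Set.mem_univ _) (Set.mem_univ _) (by linarith) (hdiff s)
    rw [slope_def_field] at hslope
    have hs' : s ≠ 0 := hs.ne'
    have : 2 * (H (2*s) / (2*s)) - H s / s = (H (2*s) - H s) / (2*s - s) := by
      rw [show 2*s - s = s by ring]
      field_simp
    rw [this]
    simpa [div_eq_inv_mul, mul_comm] using hslope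

/-- For a convex, differentiable, even, nonnegative `H` of at most linear
growth whose recession constant `H^∞(1) = lim_{s→∞} H(s)/s` exists, one has
`H'(s) → H^∞(1)` as `s → ∞`, and the recession function of `α ↦ αH'(α)` is `H^∞`,
i.e. `lim_{s→∞} (sα)H'(sα)/s = H^∞(1)|α|` for every `α`. -/
theorem recession_of_alpha_mul_deriv
    (H : ℝ → ℝ) (hconv : ConvexOn ℝ Set.univ H) (hdiff : Differentiable ℝ H)
    (hnonneg : ∀ x, 0 ≤ H x) (heven : ∀ x, H (-x) = H x)
    (C : ℝ) (hgrowth : ∀ x, |H x| ≤ C * (1 + |x|))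
    (Hinf : ℝ) (hHinf : Tendsto (fun s => H s / s) atTop (nhds Hinf)) :
    Tendsto (fun s => deriv H s) atTop (nhds Hinf) ∧
    (∀ α : ℝ, Tendsto (fun s => (s * α) * deriv H (s * α) / s) atTop
      (nhds (Hinf * |α|))) := by
  have hmain := deriv_tendsto_aux H hconv hdiff Hinf hHinf
  have hderiv_odd : ∀ x : ℝ, deriv H (-x) = - deriv H x := by
    intro x
    have hfun : (fun y : ℝ => H (-y)) = H := funext heven
    have : deriv (fun y : ℝ => H (-y)) x = - deriv H (-x) := by
      simpa using deriv_comp_neg H x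
    rw [hfun] at this
    linarith
  refine ⟨hmain, fun α => ?_⟩
  rcases lt_trichotomy α 0 with hα | rfl | hα
  · have key : ∀ᶠ s in atTop, (s * α) * deriv H (s * α) / s = (-α) * deriv H (s * (-α)) := by
      filter_upwards [eventually_gt_atTop (0:ℝ)] with s hs
      have : deriv H (s * α) = - deriv H (s * (-α)) := by
        have := hderiv_odd (s * (-α)); rw [show -(s * -α) = s * α by ring] at this; linarith
      rw [this]; field_simp
    rw [abs_of_neg hα]
    have hcomp : Tendsto (fun s : ℝ => deriv H (s * (-α))) atTop (nhds Hinf) :=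
      hmain.comp (tendsto_atTop_atTop.2 fun b =>
        ⟨b / (-α), fun a ha => by
          have hα' : (0:ℝ) < -α := by linarith
          calc b = (b / (-α)) * (-α) := (div_mul_cancel₀ b hα'.ne').symm
          _ ≤ a * (-α) := by nlinarith⟩)
    refine Tendsto.congr' (key.mono fun s hs => hs.symm) ?_
    simpa [mul_comm] using hcomp.const_mul (-α)
  · simpa using tendsto_const_nhds.congr' (by
      filter_upwards with s; simp)
  · have key : ∀ᶠ s in atTop, (s * α) * deriv H (s * α) / s = α * deriv H (s * α) := by
      filter_upwards [eventually_gt_atTop (0:ℝ)] with s hs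
      field_simp
    rw [abs_of_pos hα]
    have hcomp : Tendsto (fun s : ℝ => deriv H (s * α)) atTop (nhds Hinf) :=
      hmain.comp (tendsto_atTop_atTop.2 fun b =>
        ⟨b / α, fun a ha => by
          calc b = (b / α) * α := (div_mul_cancel₀ b hα.ne').symm
          _ ≤ a * α := by nlinarith⟩)
    refine Tendsto.congr' (key.mono fun s hs => hs.symm) ?_
    simpa [mul_comm] using hcomp.const_mul α
end
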